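/- A topological space X is e*-R_1 if and only if e*-cl_θ({x}) = e*-cl({x}) for every x ∈ X, where X is e*-R_1 means: for all x, y ∈ X with e*-cl({x}) ≠ e*-cl({y}), there exist disjoint e*-open sets U, V with e*-cl({x}) ⊆ U and e*-cl({y}) ⊆ V. -/

import Mathlib

/-!
The e*-open sets are closed under arbitrary unions, so `eStarCl` behaves like a closure operator
and `eStarCl A ⊆ eStarClTheta A` always holds; the theorem is about the reverse inclusion on
singletons. Separating `eStarCl {z}` and `eStarCl {x}` by disjoint e*-open sets `U`, `V` puts `x`
outside `eStarCl U`, so `z ∉ eStarClTheta {x}`. Conversely, `eStarClTheta {x} ⊆ eStarCl {x}` makes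
the relation `x ∈ eStarCl {y}` symmetric, hence every e*-open set containing `x` contains
`eStarCl {x}`; if `y ∉ eStarCl {x}`, a witness `U ∋ y` with `x ∉ eStarCl U` then gives the
separating pair `(eStarCl U)ᶜ`, `U`.
-/

open Set Topology

variable {X : Type*} [TopologicalSpace X]

/-- δ-closure of A. -/
def deltaCl (A : Set X) : Set X :=
  {x | ∀ U : Set X, IsOpen U → x ∈ U → (interior (closure U) ∩ A).Nonempty}

/-- A is e*-open if A ⊆ cl(int(δ-cl A)). -/
def EStarOpen (A : Set X) : Prop := A ⊆ closure (interior (deltaCl A))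

/-- A is e*-closed if its complement is e*-open. -/
def EStarClosed (A : Set X) : Prop := EStarOpen Aᶜ

/-- e*-closure: intersection of all e*-closed supersets. -/
def eStarCl (A : Set X) : Set X := ⋂₀ {F | EStarClosed F ∧ A ⊆ F}

/-- e*-interior: union of all e*-open subsets. -/
def eStarInt (A : Set X) : Set X := ⋃₀ {U | EStarOpen U ∧ U ⊆ A}

/-- e*-regular: both e*-open and e*-closed. -/
def EStarRegular (A : Set X) : Prop := EStarOpen A ∧ EStarClosed A

/-- e*-θ-closure. -/
def eStarClTheta (A : Set X) : Set X :=
  {x | ∀ U : Set X, EStarOpen U → x ∈ U → (eStarCl U ∩ A).Nonempty}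

/-- e*-θ-closed. -/
def EStarThetaClosed (A : Set X) : Prop := A = eStarClTheta A

/-- e*-θ-open. -/
def EStarThetaOpen (A : Set X) : Prop := EStarThetaClosed Aᶜ

/-- quasi e*-θ-closed. -/
def QEStarThetaClosed (A : Set X) : Prop :=
  ∀ U : Set X, EStarThetaOpen U → A ⊆ U → eStarClTheta A ⊆ U

/-- e*-θ-kernel. -/
def eStarKerTheta (A : Set X) : Set X := ⋂₀ {U | EStarThetaOpen U ∧ A ⊆ U}

lemma deltaCl_mono {A B : Set X} (h : A ⊆ B) : deltaCl A ⊆ deltaCl B :=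
  fun _ hx U hU hxU => (hx U hU hxU).mono (inter_subset_inter_right _ h)

lemma EStarOpen.sUnion {S : Set (Set X)} (h : ∀ A ∈ S, EStarOpen A) : EStarOpen (⋃₀ S) := by
  rintro x ⟨A, hA, hxA⟩
  exact closure_mono (interior_mono (deltaCl_mono (subset_sUnion_of_mem hA))) (h A hA hxA)

lemma EStarOpen.eStarClosed_compl {U : Set X} (hU : EStarOpen U) : EStarClosed Uᶜ := by
  rwa [EStarClosed, compl_compl]

lemma subset_eStarCl (A : Set X) : A ⊆ eStarCl A :=
  fun _ hx => mem_sInter.2 fun _ hF => hF.2 hx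

lemma eStarCl_subset {A F : Set X} (hF : EStarClosed F) (h : A ⊆ F) : eStarCl A ⊆ F :=
  sInter_subset_of_mem ⟨hF, h⟩

lemma eStarClosed_eStarCl (A : Set X) : EStarClosed (eStarCl A) := by
  rw [EStarClosed, eStarCl, compl_sInter]
  refine EStarOpen.sUnion ?_
  rintro _ ⟨F, ⟨hF, -⟩, rfl⟩
  exact hF

lemma EStarOpen.inter_nonempty_of_mem_eStarCl {U A : Set X} {x : X} (hU : EStarOpen U)
    (hxU : x ∈ U) (hx : x ∈ eStarCl A) : (U ∩ A).Nonempty := by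
  by_contra hUA
  have hAU : A ⊆ Uᶜ := fun a ha haU => hUA ⟨a, haU, ha⟩
  exact eStarCl_subset hU.eStarClosed_compl hAU hx hxU

lemma eStarCl_subset_eStarClTheta (A : Set X) : eStarCl A ⊆ eStarClTheta A :=
  fun _ hx U hU hxU =>
    (hU.inter_nonempty_of_mem_eStarCl hxU hx).mono (inter_subset_inter_left _ (subset_eStarCl U))

variable (X) in
def EStarR1 : Prop :=
  ∀ x y : X, eStarCl {x} ≠ eStarCl {y} →
    ∃ U V : Set X, EStarOpen U ∧ EStarOpen V ∧ Disjoint U V ∧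
      eStarCl {x} ⊆ U ∧ eStarCl {y} ⊆ V

lemma EStarR1.eStarClTheta_singleton_subset (h : EStarR1 X) (x : X) :
    eStarClTheta {x} ⊆ eStarCl {x} := by
  intro z hz
  by_contra hzx
  have hne : eStarCl {z} ≠ eStarCl {x} := fun he => hzx (he ▸ subset_eStarCl {z} rfl)
  obtain ⟨U, V, hU, hV, hUV, hzU, hxV⟩ := h z x hne
  have hxU : x ∈ eStarCl U := by
    obtain ⟨_, hxU, rfl⟩ := hz U hU (hzU (subset_eStarCl {z} rfl))
    exact hxU
  have hUcl : eStarCl U ⊆ Vᶜ := eStarCl_subset hV.eStarClosed_compl hUV.subset_compl_right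
  exact hUcl hxU (hxV (subset_eStarCl {x} rfl))

lemma exists_eStarOpen_of_notMem_eStarClTheta_singleton {x y : X} (hy : y ∉ eStarClTheta {x}) :
    ∃ U, EStarOpen U ∧ y ∈ U ∧ x ∉ eStarCl U := by
  by_contra! hU
  exact hy fun U hU' hyU => ⟨x, hU U hU' hyU, rfl⟩

lemma mem_eStarCl_singleton_symm (h : ∀ x : X, eStarClTheta {x} ⊆ eStarCl {x}) {x y : X}
    (hxy : x ∈ eStarCl {y}) : y ∈ eStarCl {x} := by
  by_contra hyx
  obtain ⟨U, hU, hyU, hxU⟩ := exists_eStarOpen_of_notMem_eStarClTheta_singleton (mt (h x ·) hyx)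
  exact hxU (eStarCl_subset (eStarClosed_eStarCl U)
    (singleton_subset_iff.2 (subset_eStarCl U hyU)) hxy)

lemma EStarOpen.eStarCl_singleton_subset (h : ∀ x : X, eStarClTheta {x} ⊆ eStarCl {x})
    {U : Set X} (hU : EStarOpen U) {x : X} (hxU : x ∈ U) : eStarCl {x} ⊆ U := by
  intro z hz
  obtain ⟨_, hzU, rfl⟩ := hU.inter_nonempty_of_mem_eStarCl hxU (mem_eStarCl_singleton_symm h hz)
  exact hzU

lemma eStarCl_singleton_eq_of_mem (h : ∀ x : X, eStarClTheta {x} ⊆ eStarCl {x}) {x y : X}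
    (hy : y ∈ eStarCl {x}) : eStarCl {y} = eStarCl {x} :=
  (eStarCl_subset (eStarClosed_eStarCl {x}) (singleton_subset_iff.2 hy)).antisymm
    (eStarCl_subset (eStarClosed_eStarCl {y})
      (singleton_subset_iff.2 (mem_eStarCl_singleton_symm h hy)))

lemma eStarR1_of_eStarClTheta_singleton_subset
    (h : ∀ x : X, eStarClTheta {x} ⊆ eStarCl {x}) : EStarR1 X := by
  intro x y hne
  have hy : y ∉ eStarClTheta {x} := fun hy => hne (eStarCl_singleton_eq_of_mem h (h x hy)).symm
  obtain ⟨U, hU, hyU, hxU⟩ := exists_eStarOpen_of_notMem_eStarClTheta_singleton hy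
  have hV : EStarOpen (eStarCl U)ᶜ := eStarClosed_eStarCl U
  exact ⟨_, U, hV, hU, disjoint_compl_left_iff_subset.2 (subset_eStarCl U),
    hV.eStarCl_singleton_subset h hxU, hU.eStarCl_singleton_subset h hyU⟩

theorem stmt19 :
    (∀ x y : X, eStarCl {x} ≠ eStarCl {y} →
      ∃ U V : Set X, EStarOpen U ∧ EStarOpen V ∧ Disjoint U V ∧
        eStarCl {x} ⊆ U ∧ eStarCl {y} ⊆ V) ↔
    (∀ x : X, eStarClTheta {x} = eStarCl {x}) :=
  ⟨fun h x => (EStarR1.eStarClTheta_singleton_subset h x).antisymm (eStarCl_subset_eStarClTheta _),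
    fun h => eStarR1_of_eStarClTheta_singleton_subset fun x => (h x).subset⟩
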